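/- Let k ≥ 0 and let φ : ℝ³ → ℂ³ be such that y ↦ Γ^k(x−y)φ(y) is σ-integrable on ∂D = ∂B₁ ∪ ∂B₂. Then for every x ∈ ∂B₁, ν₁(x) × ∫_{∂D} Γ^k(x−y)φ(y) dσ(y) = −ν₂(−x) × ∫_{∂D} Γ^k(−x−y)φ(−y) dσ(y); that is, with x̃ = −x and φ̃(ỹ) := φ(−ỹ), ν₁(x) × A_D^k[φ](x) = −ν₂(x̃) × A_D^k[φ̃](x̃). -/

import Mathlib

open MeasureTheory

/-! The point reflection `y ↦ -y` is an isometry of `ℝ³` that swaps the two spheres, so it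
preserves `μH[2]` restricted to `∂D`; as `Γ^k` is even, substituting `y ↦ -y` turns the second
potential into the first. What remains is `ν₂(-x) = -ν₁(x)` and linearity of the cross product. -/

/-- Coercion `ℝ³ ↪ ℂ³` (componentwise). -/
noncomputable def toC3 (x : EuclideanSpace ℝ (Fin 3)) : EuclideanSpace ℂ (Fin 3) :=
  (WithLp.equiv 2 (Fin 3 → ℂ)).symm fun i => (x i : ℂ)

/-- Three-dimensional cross product over `ℂ`. -/
noncomputable def crossC (a b : EuclideanSpace ℂ (Fin 3)) : EuclideanSpace ℂ (Fin 3) :=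
  (WithLp.equiv 2 (Fin 3 → ℂ)).symm
    ![a 1 * b 2 - a 2 * b 1, a 2 * b 0 - a 0 * b 2, a 0 * b 1 - a 1 * b 0]

/-- The fundamental outgoing solution `Γ^k(z) = -e^{ik|z|}/(4π|z|)`. -/
noncomputable def helmholtzFundamental (k : ℝ) (z : EuclideanSpace ℝ (Fin 3)) : ℂ :=
  -(Complex.exp (Complex.I * k * ‖z‖) / (4 * Real.pi * ‖z‖))

/-- Center of the first ball: `c₁ = (-r - ε/2, 0, 0)`. -/
noncomputable def ctr1 (r ε : ℝ) : EuclideanSpace ℝ (Fin 3) :=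
  (WithLp.equiv 2 (Fin 3 → ℝ)).symm ![-r - ε / 2, 0, 0]

/-- Center of the second ball: `c₂ = (r + ε/2, 0, 0)`. -/
noncomputable def ctr2 (r ε : ℝ) : EuclideanSpace ℝ (Fin 3) :=
  (WithLp.equiv 2 (Fin 3 → ℝ)).symm ![r + ε / 2, 0, 0]

/-- Outward unit normal on `∂B₁`: `ν₁(x) = (x - c₁)/r`. -/
noncomputable def nu1 (r ε : ℝ) (x : EuclideanSpace ℝ (Fin 3)) : EuclideanSpace ℝ (Fin 3) :=
  r⁻¹ • (x - ctr1 r ε)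

/-- Outward unit normal on `∂B₂`: `ν₂(x) = (x - c₂)/r`. -/
noncomputable def nu2 (r ε : ℝ) (x : EuclideanSpace ℝ (Fin 3)) : EuclideanSpace ℝ (Fin 3) :=
  r⁻¹ • (x - ctr2 r ε)

section HausdorffReflection

variable {X G E : Type*} [NormedAddCommGroup E] [NormedSpace ℝ E]

theorem IsometryEquiv.setIntegral_hausdorffMeasure_comp [MetricSpace X] [MeasurableSpace X]
    [BorelSpace X] (e : X ≃ᵢ X) (d : ℝ) {s : Set X} (hs : e ⁻¹' s = s) (f : X → E) :
    ∫ y in s, f (e y) ∂μH[d] = ∫ y in s, f y ∂μH[d] := by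
  conv_lhs => rw [← hs]
  exact (e.measurePreserving_hausdorffMeasure d).setIntegral_preimage_emb
    e.toHomeomorph.measurableEmbedding f s

variable [NormedAddCommGroup G]

theorem Metric.preimage_neg_sphere (c : G) (r : ℝ) :
    Neg.neg ⁻¹' Metric.sphere c r = Metric.sphere (-c) r :=
  (IsometryEquiv.neg G).preimage_sphere c r

theorem setIntegral_hausdorffMeasure_comp_neg [MeasurableSpace G] [BorelSpace G] (d : ℝ)
    {s : Set G} (hs : Neg.neg ⁻¹' s = s) (f : G → E) :
    ∫ y in s, f (-y) ∂μH[d] = ∫ y in s, f y ∂μH[d] :=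
  (IsometryEquiv.neg G).setIntegral_hausdorffMeasure_comp d hs f

end HausdorffReflection

theorem ctr2_eq_neg_ctr1 (r ε : ℝ) : ctr2 r ε = -ctr1 r ε := by
  ext i
  fin_cases i <;> simp [ctr1, ctr2]
  ring

theorem preimage_neg_spheres (r ε : ℝ) :
    Neg.neg ⁻¹' (Metric.sphere (ctr1 r ε) r ∪ Metric.sphere (ctr2 r ε) r)
      = Metric.sphere (ctr1 r ε) r ∪ Metric.sphere (ctr2 r ε) r := by
  rw [Set.preimage_union, Metric.preimage_neg_sphere, Metric.preimage_neg_sphere,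
    ctr2_eq_neg_ctr1, neg_neg, Set.union_comm]

theorem nu2_neg (r ε : ℝ) (x : EuclideanSpace ℝ (Fin 3)) : nu2 r ε (-x) = -nu1 r ε x := by
  simp only [nu1, nu2, ctr2_eq_neg_ctr1]
  module

theorem helmholtzFundamental_neg (k : ℝ) (z : EuclideanSpace ℝ (Fin 3)) :
    helmholtzFundamental k (-z) = helmholtzFundamental k z := by
  simp only [helmholtzFundamental, norm_neg]

theorem toC3_neg (v : EuclideanSpace ℝ (Fin 3)) : toC3 (-v) = -toC3 v := by
  ext i
  simp [toC3]

theorem crossC_neg_left (a b : EuclideanSpace ℂ (Fin 3)) : crossC (-a) b = -crossC a b := by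
  ext i
  fin_cases i <;> simp [crossC] <;> ring

theorem stmt_5_general (r ε : ℝ) (k : ℝ)
    (φ : EuclideanSpace ℝ (Fin 3) → EuclideanSpace ℂ (Fin 3))
    (x : EuclideanSpace ℝ (Fin 3)) :
    crossC (toC3 (nu1 r ε x))
        (∫ y in Metric.sphere (ctr1 r ε) r ∪ Metric.sphere (ctr2 r ε) r,
          helmholtzFundamental k (x - y) • φ y ∂μH[2])
      = -crossC (toC3 (nu2 r ε (-x)))
          (∫ y in Metric.sphere (ctr1 r ε) r ∪ Metric.sphere (ctr2 r ε) r,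
            helmholtzFundamental k (-x - y) • φ (-y) ∂μH[2]) := by
  have hreflect (y : EuclideanSpace ℝ (Fin 3)) :
      helmholtzFundamental k (-x - y) = helmholtzFundamental k (x - -y) := by
    rw [← helmholtzFundamental_neg k (x - -y)]
    congr 1
    abel
  simp_rw [hreflect]
  rw [setIntegral_hausdorffMeasure_comp_neg 2 (preimage_neg_spheres r ε)
    (fun y => helmholtzFundamental k (x - y) • φ y), nu2_neg, toC3_neg, crossC_neg_left, neg_neg]

/-- For `x ∈ ∂B₁`, with `x̃ = -x` and `φ̃(ỹ) := φ(-ỹ)`, the single layer potential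
satisfies `ν₁(x) × A_D^k[φ](x) = -ν₂(x̃) × A_D^k[φ̃](x̃)`. -/
theorem stmt_5 (r ε : ℝ) (hr : 0 < r) (hε : 0 < ε) (k : ℝ) (hk : 0 ≤ k)
    (φ : EuclideanSpace ℝ (Fin 3) → EuclideanSpace ℂ (Fin 3))
    (x : EuclideanSpace ℝ (Fin 3)) (hx : x ∈ Metric.sphere (ctr1 r ε) r)
    (hφ : IntegrableOn (fun y => helmholtzFundamental k (x - y) • φ y)
      (Metric.sphere (ctr1 r ε) r ∪ Metric.sphere (ctr2 r ε) r) μH[2]) :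
    crossC (toC3 (nu1 r ε x))
        (∫ y in Metric.sphere (ctr1 r ε) r ∪ Metric.sphere (ctr2 r ε) r,
          helmholtzFundamental k (x - y) • φ y ∂μH[2])
      = -crossC (toC3 (nu2 r ε (-x)))
          (∫ y in Metric.sphere (ctr1 r ε) r ∪ Metric.sphere (ctr2 r ε) r,
            helmholtzFundamental k (-x - y) • φ (-y) ∂μH[2]) :=
  stmt_5_general r ε k φ x
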